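/- arXiv:1011.4263 — 3 statements merged into one kernel-verified Lean document; each statement's English description precedes it below -/
import Mathlib

section
/- If (Q_n) is a sequence of perfect subsets of Cantor space with Q_{n+1} ⊆_{n+1} Q_n for all n ∈ ℕ, then Q = ⋂_n Q_n is a perfect set and Q ⊆_n Q_n for each n (the fusion property of the orders ⊆_n). -/
noncomputable section
open scoped Classical

/-- A perfect subset of Cantor space (perfect and nonempty). -/
def PerfectSet (C : Set (ℕ → Bool)) : Prop := Perfect C ∧ C.Nonempty

/-- `l` is a node of the tree `T_Q` of the set `Q ⊆ 2^ℕ`. -/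
def InTree (Q : Set (ℕ → Bool)) (l : List Bool) : Prop :=
  ∃ x ∈ Q, ∀ i : Fin l.length, l.get i = x i

/-- `l` is a splitting (ramification) node of `T_Q`. -/
def SplitNode (Q : Set (ℕ → Bool)) (l : List Bool) : Prop :=
  InTree Q (l ++ [false]) ∧ InTree Q (l ++ [true])

/-- The first splitting node of `T_Q` extending `t` (junk value `t` if none exists). -/
noncomputable def firstSplit (Q : Set (ℕ → Bool)) (t : List Bool) : List Bool :=
  if h : ∃ l, t <+: l ∧ SplitNode Q l ∧
      ∀ l', t <+: l' → SplitNode Q l' → l.length ≤ l'.length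
  then h.choose else t

/-- Auxiliary: the canonical node `u(Q)`, with `u` given in reverse. -/
noncomputable def canonNodeRev (Q : Set (ℕ → Bool)) : List Bool → List Bool
  | [] => []
  | i :: u => firstSplit Q (canonNodeRev Q u) ++ [i]

/-- The canonical node `u(Q)` of the tree `T_Q`. -/
noncomputable def canonNode (Q : Set (ℕ → Bool)) (u : List Bool) : List Bool :=
  canonNodeRev Q u.reverse

/-- The canonical piece `Q(u) = Q ∩ [u(Q)]`. -/
noncomputable def piece (Q : Set (ℕ → Bool)) (u : List Bool) : Set (ℕ → Bool) :=
  {x ∈ Q | ∀ i : Fin (canonNode Q u).length, (canonNode Q u).get i = x i}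

/-- `S ⊆_n Q` : `S(u) ⊆ Q(u)` for every binary string `u` of length `n`. -/
def subWithin (n : ℕ) (S Q : Set (ℕ → Bool)) : Prop :=
  ∀ u : List Bool, u.length = n → piece S u ⊆ piece Q u

/-!
If `S ⊆_n Q` for perfect `S` and `Q`, then `u(S) = u(Q)` for `|u| ≤ n`: points of `S` leaving the
next splitting node of `S` along its two branches also lie in the corresponding pieces of `Q`, and
two points leaving two nodes along different branches force the nodes to be equal. Along a fusion
sequence the nodes `u(Q_m)`, `m ≥ |u|`, therefore all coincide with one node `c(u)`, and by
compactness `Q = ⋂ Q_m` meets every cylinder `[c(u)]`. So both branches of the first splitting node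
of `Q_|u|` above `c(u)` survive in `Q`, making it the first splitting node of `T_Q` above `c(u)`.
Hence `u(Q) = c(u)`, which gives `Q ⊆_n Q_n`, and every node of `T_Q` has a splitting extension,
which makes the closed set `Q` perfect.
-/

open Topology

def cylinder (l : List Bool) : Set (ℕ → Bool) := {x | ∀ i : Fin l.length, l.get i = x i}

def initSeg (x : ℕ → Bool) (n : ℕ) : List Bool := List.ofFn fun i : Fin n => x i

section Cylinders

variable {l m : List Bool} {x y z : ℕ → Bool}

lemma mem_cylinder_iff : x ∈ cylinder l ↔ ∀ i (hi : i < l.length), l[i] = x i :=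
  ⟨fun h i hi => h ⟨i, hi⟩, fun h i => h i i.isLt⟩

@[simp] lemma length_initSeg (x : ℕ → Bool) (n : ℕ) : (initSeg x n).length = n :=
  List.length_ofFn

lemma mem_cylinder_initSeg {n : ℕ} : y ∈ cylinder (initSeg x n) ↔ ∀ i < n, y i = x i := by
  simp [mem_cylinder_iff, initSeg, eq_comm]

lemma prefix_of_mem_cylinder (hl : x ∈ cylinder l) (hm : x ∈ cylinder m)
    (h : l.length ≤ m.length) : l <+: m := by
  rw [mem_cylinder_iff] at hl hm
  rw [List.prefix_iff_eq_take]
  refine List.ext_getElem (by simp [h]) fun i h1 h2 => ?_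
  simp [hl, hm]

lemma eq_of_mem_cylinder (hl : x ∈ cylinder l) (hm : x ∈ cylinder m)
    (h : l.length = m.length) : l = m :=
  (prefix_of_mem_cylinder hl hm h.le).eq_of_length h

lemma cylinder_anti (h : l <+: m) : cylinder m ⊆ cylinder l := by
  intro x hx
  rw [mem_cylinder_iff] at hx ⊢
  intro i hi
  rw [← hx i (hi.trans_le h.length_le), h.getElem]

lemma mem_cylinder_append_singleton {b : Bool} :
    x ∈ cylinder (l ++ [b]) ↔ x ∈ cylinder l ∧ x l.length = b := by
  simp only [mem_cylinder_iff, List.length_append, List.length_singleton]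
  constructor
  · intro h
    refine ⟨fun i hi => ?_, ?_⟩
    · rw [← h i (by omega), List.getElem_append_left hi]
    · rw [← h l.length (by omega)]
      simp
  · rintro ⟨h, rfl⟩ i hi
    rcases Nat.lt_succ_iff_lt_or_eq.mp hi with hi | rfl
    · rw [List.getElem_append_left hi, h i hi]
    · simp

lemma length_le_of_mem_cylinder (hx : x ∈ cylinder l) (hy : y ∈ cylinder l) {k : ℕ}
    (hk : x k ≠ y k) : l.length ≤ k := by
  by_contra! h
  rw [mem_cylinder_iff] at hx hy
  exact hk ((hx k h).symm.trans (hy k h))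

lemma eq_of_mem_cylinder_append_singleton {i j : Bool} (hij : i ≠ j)
    (hyl : y ∈ cylinder (l ++ [i])) (hym : y ∈ cylinder (m ++ [i]))
    (hzl : z ∈ cylinder (l ++ [j])) (hzm : z ∈ cylinder (m ++ [j])) : l = m := by
  rw [mem_cylinder_append_singleton] at hyl hym hzl hzm
  have hml : m.length ≤ l.length :=
    length_le_of_mem_cylinder hym.1 hzm.1 (by rw [hyl.2, hzl.2]; exact hij)
  have hlm : l.length ≤ m.length :=
    length_le_of_mem_cylinder hyl.1 hzl.1 (by rw [hym.2, hzm.2]; exact hij)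
  exact eq_of_mem_cylinder hyl.1 hym.1 (le_antisymm hlm hml)

lemma isClopen_cylinder (l : List Bool) : IsClopen (cylinder l) := by
  have : cylinder l = ⋂ i : Fin l.length, (fun x : ℕ → Bool => x i) ⁻¹' {l.get i} := by
    ext x
    simp [cylinder, eq_comm]
  rw [this]
  exact isClopen_iInter_of_finite fun i => (isClopen_discrete _).preimage (continuous_apply _)

lemma exists_cylinder_initSeg_subset {U : Set (ℕ → Bool)} (hU : U ∈ 𝓝 x) :
    ∃ k, cylinder (initSeg x k) ⊆ U := by
  obtain ⟨_, ⟨y, k, rfl⟩, hx, hsub⟩ :=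
    (PiNat.isTopologicalBasis_cylinders fun _ => Bool).mem_nhds_iff.mp hU
  refine ⟨k, fun z hz => hsub ?_⟩
  rw [← PiNat.mem_cylinder_iff_eq.mp hx]
  exact mem_cylinder_initSeg.mp hz

end Cylinders

section SplitNodes

variable {S Q : Set (ℕ → Bool)} {l s t : List Bool} {x y : ℕ → Bool}

lemma SplitNode.mono (h : S ⊆ Q) (hs : SplitNode S l) : SplitNode Q l :=
  ⟨let ⟨x, hx, hxl⟩ := hs.1; ⟨x, h hx, hxl⟩, let ⟨x, hx, hxl⟩ := hs.2; ⟨x, h hx, hxl⟩⟩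

lemma splitNode_of_mem_cylinder (hx : x ∈ Q) (hy : y ∈ Q) (hxl : x ∈ cylinder l)
    (hyl : y ∈ cylinder l) (hne : x l.length ≠ y l.length) : SplitNode Q l := by
  have hx' : x ∈ cylinder (l ++ [x l.length]) := mem_cylinder_append_singleton.mpr ⟨hxl, rfl⟩
  have hy' : y ∈ cylinder (l ++ [y l.length]) := mem_cylinder_append_singleton.mpr ⟨hyl, rfl⟩
  generalize x l.length = i at hx' hne
  generalize y l.length = j at hy' hne
  cases i <;> cases j
  exacts [absurd rfl hne, ⟨⟨x, hx, hx'⟩, ⟨y, hy, hy'⟩⟩, ⟨⟨y, hy, hy'⟩, ⟨x, hx, hx'⟩⟩,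
    absurd rfl hne]

lemma exists_splitNode_of_ne (hx : x ∈ Q) (hy : y ∈ Q) (hxy : x ≠ y) (hxt : x ∈ cylinder t)
    (hyt : y ∈ cylinder t) : ∃ s, t <+: s ∧ SplitNode Q s ∧ x ∈ cylinder s ∧ y ∈ cylinder s := by
  set k := PiNat.firstDiff x y
  have hk : x k ≠ y k := PiNat.apply_firstDiff_ne hxy
  have hxs : x ∈ cylinder (initSeg x k) := mem_cylinder_initSeg.mpr fun _ _ => rfl
  have hys : y ∈ cylinder (initSeg x k) :=
    mem_cylinder_initSeg.mpr fun _ hi => (PiNat.apply_eq_of_lt_firstDiff hi).symm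
  refine ⟨initSeg x k, prefix_of_mem_cylinder hxt hxs ?_,
    splitNode_of_mem_cylinder hx hy hxs hys (by simpa using hk), hxs, hys⟩
  simpa using length_le_of_mem_cylinder hxt hyt hk

lemma Perfect.exists_splitNode (hQ : Perfect Q) (ht : InTree Q t) :
    ∃ s, t <+: s ∧ SplitNode Q s := by
  obtain ⟨x, hx, hxt⟩ := ht
  obtain ⟨y, ⟨hyt, hy⟩, hyx⟩ :=
    accPt_iff_nhds.mp (hQ.acc x hx) _ ((isClopen_cylinder t).isOpen.mem_nhds hxt)
  obtain ⟨s, hts, hs, -⟩ := exists_splitNode_of_ne hx hy hyx.symm hxt hyt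
  exact ⟨s, hts, hs⟩

lemma firstSplit_spec (h : ∃ s, t <+: s ∧ SplitNode Q s) :
    t <+: firstSplit Q t ∧ SplitNode Q (firstSplit Q t) ∧
      ∀ s, t <+: s → SplitNode Q s → (firstSplit Q t).length ≤ s.length := by
  have hmin : ∃ l, t <+: l ∧ SplitNode Q l ∧
      ∀ l', t <+: l' → SplitNode Q l' → l.length ≤ l'.length := by
    obtain ⟨s, ⟨hts, hs⟩, hmin⟩ :=
      (measure List.length).wf.has_min {s | t <+: s ∧ SplitNode Q s} h
    exact ⟨s, hts, hs, fun s' hts' hs' => not_lt.mp (hmin s' ⟨hts', hs'⟩)⟩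
  rw [firstSplit, dif_pos hmin]
  exact hmin.choose_spec

/-- A point of `Q` leaving `firstSplit Q t` early would split off a shorter splitting node
above `t`. -/
lemma mem_cylinder_firstSplit (h : ∃ s, t <+: s ∧ SplitNode Q s) (hx : x ∈ Q)
    (hxt : x ∈ cylinder t) : x ∈ cylinder (firstSplit Q t) := by
  obtain ⟨htf, ⟨⟨y, hy, hyf⟩, -⟩, hmin⟩ := firstSplit_spec h
  replace hyf := cylinder_anti (List.prefix_append _ _) hyf
  by_cases hxy : x = y
  · exact hxy ▸ hyf
  obtain ⟨s, hts, hs, hxs, hys⟩ := exists_splitNode_of_ne hx hy hxy hxt (cylinder_anti htf hyf)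
  exact cylinder_anti (prefix_of_mem_cylinder hyf hys (hmin s hts hs)) hxs

lemma firstSplit_eq_of_minimal (hts : t <+: s) (hs : SplitNode Q s)
    (hmin : ∀ s', t <+: s' → SplitNode Q s' → s.length ≤ s'.length) : firstSplit Q t = s := by
  obtain ⟨htf, hf, hfmin⟩ := firstSplit_spec ⟨s, hts, hs⟩
  obtain ⟨y, hy, hys⟩ := hs.1
  replace hys := cylinder_anti (List.prefix_append _ _) hys
  exact eq_of_mem_cylinder (mem_cylinder_firstSplit ⟨s, hts, hs⟩ hy (cylinder_anti hts hys)) hys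
    (le_antisymm (hfmin s hts hs) (hmin _ htf hf))

lemma perfect_of_exists_splitNode (hQ : IsClosed Q)
    (h : ∀ t, InTree Q t → ∃ s, t <+: s ∧ SplitNode Q s) : Perfect Q := by
  refine ⟨hQ, fun x hx => accPt_iff_nhds.mpr fun U hU => ?_⟩
  obtain ⟨k, hkU⟩ := exists_cylinder_initSeg_subset hU
  have hxt : x ∈ cylinder (initSeg x k) := mem_cylinder_initSeg.mpr fun _ _ => rfl
  have hsplit := h _ ⟨x, hx, hxt⟩
  obtain ⟨htf, hf, -⟩ := firstSplit_spec hsplit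
  set f := firstSplit Q (initSeg x k)
  obtain ⟨y, hy, hyf⟩ : ∃ y ∈ Q, y ∈ cylinder (f ++ [!x f.length]) := by
    cases x f.length
    exacts [hf.2, hf.1]
  rw [mem_cylinder_append_singleton] at hyf
  refine ⟨y, ⟨hkU (cylinder_anti htf hyf.1), hy⟩, fun hyx => ?_⟩
  simp [hyx] at hyf

end SplitNodes

section CanonicalNodes

variable {S Q : Set (ℕ → Bool)} {u : List Bool} {x : ℕ → Bool}

lemma canonNode_append_singleton (Q : Set (ℕ → Bool)) (u : List Bool) (i : Bool) :
    canonNode Q (u ++ [i]) = firstSplit Q (canonNode Q u) ++ [i] := by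
  simp [canonNode, canonNodeRev]

lemma piece_eq_inter (Q : Set (ℕ → Bool)) (u : List Bool) :
    piece Q u = Q ∩ cylinder (canonNode Q u) :=
  rfl

lemma piece_nil (Q : Set (ℕ → Bool)) : piece Q [] = Q :=
  Set.ext fun _ => and_iff_left fun i => i.elim0

lemma piece_nonempty (hQ : PerfectSet Q) (u : List Bool) : (piece Q u).Nonempty := by
  induction u using List.reverseRecOn with
  | nil => exact (piece_nil Q).symm ▸ hQ.2
  | append_singleton u i ih =>
    obtain ⟨-, hf, -⟩ := firstSplit_spec (hQ.1.exists_splitNode ih)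
    rw [piece_eq_inter, canonNode_append_singleton]
    cases i
    exacts [hf.1, hf.2]

lemma exists_splitNode_canonNode (hQ : PerfectSet Q) (u : List Bool) :
    ∃ s, canonNode Q u <+: s ∧ SplitNode Q s :=
  hQ.1.exists_splitNode (piece_nonempty hQ u)

lemma canonNode_prefix_append_singleton (hQ : PerfectSet Q) (u : List Bool) (i : Bool) :
    canonNode Q u <+: canonNode Q (u ++ [i]) := by
  rw [canonNode_append_singleton]
  exact (firstSplit_spec (exists_splitNode_canonNode hQ u)).1.trans (List.prefix_append _ _)

lemma length_le_length_canonNode (hQ : PerfectSet Q) (u : List Bool) :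
    u.length ≤ (canonNode Q u).length := by
  induction u using List.reverseRecOn with
  | nil => simp
  | append_singleton u i ih =>
    have := (firstSplit_spec (exists_splitNode_canonNode hQ u)).1.length_le
    simp only [canonNode_append_singleton, List.length_append, List.length_singleton]
    omega

lemma piece_append_singleton_subset (hQ : PerfectSet Q) (u : List Bool) (i : Bool) :
    piece Q (u ++ [i]) ⊆ piece Q u := fun _ hx =>
  ⟨hx.1, cylinder_anti (canonNode_prefix_append_singleton hQ u i) hx.2⟩

lemma exists_mem_piece_append_singleton (hQ : PerfectSet Q) (hx : x ∈ piece Q u) :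
    ∃ i, x ∈ piece Q (u ++ [i]) := by
  refine ⟨x (firstSplit Q (canonNode Q u)).length, ?_⟩
  rw [piece_eq_inter, canonNode_append_singleton, Set.mem_inter_iff, mem_cylinder_append_singleton]
  exact ⟨hx.1, mem_cylinder_firstSplit (exists_splitNode_canonNode hQ u) hx.1 hx.2, rfl⟩

lemma exists_mem_piece (hQ : PerfectSet Q) (hx : x ∈ Q) (n : ℕ) :
    ∃ u : List Bool, u.length = n ∧ x ∈ piece Q u := by
  induction n with
  | zero => exact ⟨[], rfl, (piece_nil Q).symm ▸ hx⟩
  | succ n ih =>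
    obtain ⟨u, rfl, hxu⟩ := ih
    obtain ⟨i, hxi⟩ := exists_mem_piece_append_singleton hQ hxu
    exact ⟨u ++ [i], by simp, hxi⟩

lemma subWithin_refl (n : ℕ) (Q : Set (ℕ → Bool)) : subWithin n Q Q :=
  fun _ _ => subset_rfl

lemma subWithin.trans {n : ℕ} {R : Set (ℕ → Bool)} (hSR : subWithin n S R)
    (hRQ : subWithin n R Q) : subWithin n S Q :=
  fun u hu => (hSR u hu).trans (hRQ u hu)

lemma subWithin.of_succ (hS : PerfectSet S) (hQ : PerfectSet Q) {n : ℕ}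
    (h : subWithin (n + 1) S Q) : subWithin n S Q := by
  intro u hu x hx
  obtain ⟨i, hxi⟩ := exists_mem_piece_append_singleton hS hx
  exact piece_append_singleton_subset hQ u i (h _ (by simp [hu]) hxi)

lemma subWithin.mono (hS : PerfectSet S) (hQ : PerfectSet Q) {m n : ℕ}
    (h : subWithin n S Q) (hmn : m ≤ n) : subWithin m S Q := by
  induction n, hmn using Nat.le_induction with
  | base => exact h
  | succ n _ ih => exact ih (h.of_succ hS hQ)

lemma subWithin.subset (hS : PerfectSet S) (hQ : PerfectSet Q) {n : ℕ}
    (h : subWithin n S Q) : S ⊆ Q := by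
  simpa only [piece_nil] using h.mono hS hQ (Nat.zero_le n) [] rfl

lemma canonNode_eq_of_subWithin (hS : PerfectSet S) (hQ : PerfectSet Q) {n : ℕ}
    (h : subWithin n S Q) (hu : u.length ≤ n) : canonNode S u = canonNode Q u := by
  induction u using List.reverseRecOn with
  | nil => rfl
  | append_singleton u i ih =>
    have hu' : u.length + 1 ≤ n := by simpa using hu
    have h' := h.mono hS hQ hu'
    obtain ⟨y, hyS⟩ := piece_nonempty hS (u ++ [false])
    obtain ⟨z, hzS⟩ := piece_nonempty hS (u ++ [true])
    have hyQ := h' _ (by simp) hyS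
    have hzQ := h' _ (by simp) hzS
    simp only [piece_eq_inter, canonNode_append_singleton, ih (by omega)] at hyS hzS hyQ hzQ
    rw [canonNode_append_singleton, canonNode_append_singleton, ih (by omega),
      eq_of_mem_cylinder_append_singleton Bool.false_ne_true hyS.2 hyQ.2 hzS.2 hzQ.2]

end CanonicalNodes

structure IsFusionSequence (Q : ℕ → Set (ℕ → Bool)) : Prop where
  perfectSet : ∀ n, PerfectSet (Q n)
  subWithin_succ : ∀ n, subWithin (n + 1) (Q (n + 1)) (Q n)

/-- The node `c(u)`: for a fusion sequence it equals `u(Q m)` for every `m ≥ |u|`. -/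
def fusionNode (Q : ℕ → Set (ℕ → Bool)) (u : List Bool) : List Bool :=
  canonNode (Q u.length) u

namespace IsFusionSequence

variable {Q : ℕ → Set (ℕ → Bool)}

lemma subWithin_of_le (hQ : IsFusionSequence Q) {n m : ℕ} (h : n ≤ m) :
    subWithin n (Q m) (Q n) := by
  induction m, h using Nat.le_induction with
  | base => exact subWithin_refl n (Q n)
  | succ m hnm ih =>
    exact ((hQ.subWithin_succ m).mono (hQ.perfectSet _) (hQ.perfectSet _)
      (hnm.trans m.le_succ)).trans ih

lemma antitone (hQ : IsFusionSequence Q) : Antitone Q := fun _ _ h =>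
  (hQ.subWithin_of_le h).subset (hQ.perfectSet _) (hQ.perfectSet _)

lemma canonNode_eq_fusionNode (hQ : IsFusionSequence Q) {u : List Bool} {m : ℕ} (h : u.length ≤ m) :
    canonNode (Q m) u = fusionNode Q u :=
  canonNode_eq_of_subWithin (hQ.perfectSet m) (hQ.perfectSet _) (hQ.subWithin_of_le h) le_rfl

lemma fusionNode_append_singleton (hQ : IsFusionSequence Q) (u : List Bool) (i : Bool) :
    fusionNode Q (u ++ [i]) = firstSplit (Q u.length) (fusionNode Q u) ++ [i] := by
  have h := canonNode_eq_of_subWithin (hQ.perfectSet _) (hQ.perfectSet _)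
    (hQ.subWithin_succ u.length) (u := u ++ [i]) (by simp)
  rw [fusionNode, List.length_append, List.length_singleton, h, canonNode_append_singleton]
  rfl

lemma nonempty_iInter_inter_cylinder (hQ : IsFusionSequence Q) (u : List Bool) :
    ((⋂ n, Q n) ∩ cylinder (fusionNode Q u)).Nonempty := by
  have hclosed : ∀ n, IsClosed (Q n ∩ cylinder (fusionNode Q u)) := fun n =>
    (hQ.perfectSet n).1.closed.inter (isClopen_cylinder _).isClosed
  have hne : ∀ n, (Q n ∩ cylinder (fusionNode Q u)).Nonempty := fun n =>
    (piece_nonempty (hQ.perfectSet (max n u.length)) u).mono <| by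
      rw [piece_eq_inter, ← hQ.canonNode_eq_fusionNode (le_max_right n u.length)]
      exact Set.inter_subset_inter_left _ (hQ.antitone (le_max_left _ _))
  rw [Set.iInter_inter]
  exact IsCompact.nonempty_iInter_of_directed_nonempty_isCompact_isClosed _
    (Antitone.directed_ge fun _ _ h => Set.inter_subset_inter_left _ (hQ.antitone h)) hne
    (fun n => (hclosed n).isCompact) hclosed

lemma splitNode_iInter (hQ : IsFusionSequence Q) (u : List Bool) :
    SplitNode (⋂ n, Q n) (firstSplit (Q u.length) (fusionNode Q u)) := by
  have h := fun i => hQ.nonempty_iInter_inter_cylinder (u ++ [i])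
  simp only [hQ.fusionNode_append_singleton] at h
  exact ⟨h false, h true⟩

lemma firstSplit_iInter (hQ : IsFusionSequence Q) (u : List Bool) :
    firstSplit (⋂ n, Q n) (fusionNode Q u) = firstSplit (Q u.length) (fusionNode Q u) := by
  obtain ⟨hpre, -, hmin⟩ := firstSplit_spec (exists_splitNode_canonNode (hQ.perfectSet u.length) u)
  exact firstSplit_eq_of_minimal hpre (hQ.splitNode_iInter u)
    fun s hs hsplit => hmin s hs (hsplit.mono (Set.iInter_subset _ _))

lemma canonNode_iInter (hQ : IsFusionSequence Q) (u : List Bool) :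
    canonNode (⋂ n, Q n) u = fusionNode Q u := by
  induction u using List.reverseRecOn with
  | nil => rfl
  | append_singleton u i ih =>
    rw [canonNode_append_singleton, ih, hQ.firstSplit_iInter, hQ.fusionNode_append_singleton]

lemma perfectSet_iInter (hQ : IsFusionSequence Q) : PerfectSet (⋂ n, Q n) := by
  refine ⟨perfect_of_exists_splitNode (isClosed_iInter fun n => (hQ.perfectSet n).1.closed)
    fun t ⟨x, hx, hxt⟩ => ?_, (hQ.nonempty_iInter_inter_cylinder []).mono Set.inter_subset_left⟩
  obtain ⟨u, hu, -, hxu⟩ :=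
    exists_mem_piece (hQ.perfectSet t.length) (Set.mem_iInter.mp hx t.length) t.length
  rw [hQ.canonNode_eq_fusionNode hu.le] at hxu
  have htu : t <+: fusionNode Q u := prefix_of_mem_cylinder hxt hxu <| by
    rw [← hu]
    exact length_le_length_canonNode (hQ.perfectSet u.length) u
  exact ⟨_, htu.trans (firstSplit_spec (exists_splitNode_canonNode (hQ.perfectSet u.length) u)).1,
    hQ.splitNode_iInter u⟩

lemma subWithin_iInter (hQ : IsFusionSequence Q) (n : ℕ) : subWithin n (⋂ m, Q m) (Q n) := by
  rintro u rfl x ⟨hx, hxu⟩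
  refine ⟨Set.mem_iInter.mp hx _, ?_⟩
  change x ∈ cylinder (canonNode (⋂ m, Q m) u) at hxu
  rwa [hQ.canonNode_iInter] at hxu

end IsFusionSequence

/-- Fusion property: if `Q_{n+1} ⊆_{n+1} Q_n` for all `n`, then `Q = ⋂_n Q_n`
is perfect and `Q ⊆_n Q_n` for each `n`. -/
theorem stmt1 (Q : ℕ → Set (ℕ → Bool)) (hperf : ∀ n, PerfectSet (Q n))
    (hsub : ∀ n, subWithin (n + 1) (Q (n + 1)) (Q n)) :
    PerfectSet (⋂ n, Q n) ∧ ∀ n, subWithin n (⋂ m, Q m) (Q n) := by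
  have hQ : IsFusionSequence Q := ⟨hperf, hsub⟩
  exact ⟨hQ.perfectSet_iInter, hQ.subWithin_iInter⟩
end
end

section
/- Decidability of combinatorial forcing: for every (u,a) ∈ 2^{<ℕ} × 𝒜ℛ and every perfect Q ⊆ 2^ℕ and Y ∈ 𝒮 with [a,Y] ≠ ∅, there exist a perfect M ⊆ Q and X ≤ Y compatible with a such that (M,X) decides (u,a), i.e., (M,X) accepts or rejects (u,a). -/
noncomputable section
open scoped Classical

noncomputable section
open scoped Classical

/-- An abstract Ramsey structure `(ℛ, 𝒮, ≤, ≤⁰, r, s)` with finitizations. -/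
structure RamseyStructure where
  R : Type
  S : Type
  AR : Type
  AS : Type
  le : S → S → Prop
  le0 : R → S → Prop
  r : R → ℕ → AR
  s : S → ℕ → AS
  lenR : AR → ℕ
  lenS : AS → ℕ
  lefin : AS → AS → Prop
  le0fin : AR → AS → Prop

namespace RamseyStructure

variable (σ : RamseyStructure)

def A1 : Prop := (∀ A B, σ.r A 0 = σ.r B 0) ∧ (∀ X Y, σ.s X 0 = σ.s Y 0)

def A2 : Prop := (∀ A B, A ≠ B → ∃ n, σ.r A n ≠ σ.r B n) ∧
  (∀ X Y, X ≠ Y → ∃ n, σ.s X n ≠ σ.s Y n)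

def A3 : Prop :=
  (∀ A B n m, σ.r A n = σ.r B m → n = m ∧ ∀ k, k < n → σ.r A k = σ.r B k) ∧
  (∀ X Y n m, σ.s X n = σ.s Y m → n = m ∧ ∀ k, k < n → σ.s X k = σ.s Y k)

/-- Approximations carry their length. -/
def lenOK : Prop := (∀ A n, σ.lenR (σ.r A n) = n) ∧ (∀ X n, σ.lenS (σ.s X n) = n)

/-- `a ⊑ b` : `b` end-extends `a` (in `𝒜ℛ`). -/
def endExtR (a b : σ.AR) : Prop :=
  ∀ B n, b = σ.r B n → ∃ m, m ≤ σ.lenR b ∧ a = σ.r B m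

/-- `x ⊑ y` : `y` end-extends `x` (in `𝒜𝒮`). -/
def endExtS (x y : σ.AS) : Prop :=
  ∀ Y n, y = σ.s Y n → ∃ m, m ≤ σ.lenS y ∧ x = σ.s Y m

/-- Axiom (A.4) (finitization). -/
def A4 : Prop :=
  (∀ x : σ.AS, {a : σ.AR | σ.le0fin a x}.Finite ∧ {y : σ.AS | σ.lefin y x}.Finite) ∧
  (∀ X Y, σ.le X Y ↔ ∀ n, ∃ m, σ.lefin (σ.s X n) (σ.s Y m)) ∧
  (∀ A X, σ.le0 A X ↔ ∀ n, ∃ m, σ.le0fin (σ.r A n) (σ.s X m)) ∧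
  (∀ a x y, σ.le0fin a x → σ.lefin x y → σ.le0fin a y) ∧
  (∀ a b x, σ.endExtR a b → σ.le0fin b x → ∃ y, σ.endExtS y x ∧ σ.le0fin a y)

/-- `depth_Y(a)`, an integer (`-1` if `a` fits in no approximation of `Y`). -/
noncomputable def depth (a : σ.AR) (Y : σ.S) : ℤ :=
  if ∃ k, σ.le0fin a (σ.s Y k) then (sInf {k | σ.le0fin a (σ.s Y k)} : ℕ) else -1

/-- The basic set `[a, Y] ⊆ ℛ`. -/
def basicR (a : σ.AR) (Y : σ.S) : Set σ.R := {A | σ.le0 A Y ∧ ∃ n, σ.r A n = a}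

/-- The basic set `[x, Y] ⊆ 𝒮`. -/
def basicSx (x : σ.AS) (Y : σ.S) : Set σ.S := {X | σ.le X Y ∧ ∃ n, σ.s X n = x}

/-- The basic set `[n, Y] = [s_n(Y), Y] ⊆ 𝒮`. -/
def basicSn (n : ℕ) (Y : σ.S) : Set σ.S := σ.basicSx (σ.s Y n) Y

/-- Axiom (A.5) (amalgamation). -/
def A5 : Prop := ∀ (a : σ.AR) (Y : σ.S),
  ((0:ℤ) ≤ σ.depth a Y → ∀ X ∈ σ.basicSn (σ.depth a Y).toNat Y, (σ.basicR a X).Nonempty) ∧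
  (∀ X, σ.le X Y → (σ.basicR a X).Nonempty →
    ∃ Y' ∈ σ.basicSn (σ.depth a Y).toNat Y, σ.basicR a Y' ⊆ σ.basicR a X)

/-- Axiom (A.6) (abstract pigeonhole principle). -/
def A6 : Prop := ∀ (a : σ.AR) (O : Set σ.AR) (Y : σ.S), (σ.basicR a Y).Nonempty →
  ∃ X ∈ σ.basicSn (σ.depth a Y).toNat Y,
    (∀ A ∈ σ.basicR a X, σ.r A (σ.lenR a + 1) ∈ O) ∨
    (∀ A ∈ σ.basicR a X, σ.r A (σ.lenR a + 1) ∉ O)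

/-- All the axioms (A.1)–(A.6) together with coherence of lengths. -/
def AxiomsAll : Prop := σ.A1 ∧ σ.A2 ∧ σ.A3 ∧ σ.lenOK ∧ σ.A4 ∧ σ.A5 ∧ σ.A6

/-- `𝒮` is closed in `𝒜𝒮^ℕ` (product of discrete topologies), via `X ↦ (s_n(X))_n`. -/
def SClosed : Prop :=
  letI : TopologicalSpace σ.AS := ⊥
  IsClosed {f : ℕ → σ.AS | ∃ X : σ.S, ∀ n, σ.s X n = f n}

/-- `𝒜ℛ[X] = {b : [b,X] ≠ ∅}`. -/
def ARof (X : σ.S) : Set σ.AR := {b | (σ.basicR b X).Nonempty}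

end RamseyStructure

/-- `x|k`, the length-`k` initial segment of `x ∈ 2^ℕ`. -/
def restrict (x : ℕ → Bool) (k : ℕ) : List Bool := List.ofFn fun i : Fin k => x i

/-- Combinatorial forcing: `(Q,Y)` accepts `(u,a)` (relative to `ℱ`). -/
def accepts (σ : RamseyStructure) (F : Set (List Bool × σ.AR)) (Q : Set (ℕ → Bool))
    (Y : σ.S) (u : List Bool) (a : σ.AR) : Prop :=
  ∀ x ∈ piece Q u, ∀ B ∈ σ.basicR a Y, ∃ k m : ℕ, (restrict x k, σ.r B m) ∈ F

/-- `(Q,Y)` rejects `(u,a)`: no `(M,X)` with `M` perfect `⊆ Q(u)`, `X ≤ Y`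
compatible with `a`, accepts `(u,a)`. -/
def rejects (σ : RamseyStructure) (F : Set (List Bool × σ.AR)) (Q : Set (ℕ → Bool))
    (Y : σ.S) (u : List Bool) (a : σ.AR) : Prop :=
  ∀ M : Set (ℕ → Bool), PerfectSet M → M ⊆ piece Q u →
    ∀ X : σ.S, σ.le X Y → (σ.basicR a X).Nonempty → ¬ accepts σ F M X u a

/-- `(Q,Y)` decides `(u,a)`: it accepts or rejects it. -/
def decides (σ : RamseyStructure) (F : Set (List Bool × σ.AR)) (Q : Set (ℕ → Bool))
    (Y : σ.S) (u : List Bool) (a : σ.AR) : Prop :=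
  accepts σ F Q Y u a ∨ rejects σ F Q Y u a

/-!
Either `(Q,Y)` rejects `(u,a)`, or by the very definition of rejection some `(M,X)` with
`M ⊆ Q(u)` and `X ≤ Y` accepts it. In the first case `(Q,Y)` itself is the witness, which
needs `Y ≤ Y`: reflexivity is not an axiom, but it follows from (A.6), which supplies
`X ≤ Y` agreeing with `Y` on `s_j` as soon as `a` is replaced by an approximation of some
`A ∈ [a,Y]` of depth `> j`.
-/

namespace RamseyStructure

variable {σ : RamseyStructure}

lemma r_injective (h3 : σ.A3) (A : σ.R) : Function.Injective (σ.r A) :=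
  fun n m h => (h3.1 A A n m h).1

lemma s_eq_of_mem_basicSn (h3 : σ.A3) {X Y : σ.S} {d j : ℕ} (hX : X ∈ σ.basicSn d Y)
    (hj : j < d) : σ.s X j = σ.s Y j := by
  obtain ⟨-, n, hn⟩ := hX
  obtain ⟨rfl, hagree⟩ := h3.2 X Y n d hn
  exact hagree j hj

/-- Only finitely many `b` fit into `s_0(Y), …, s_j(Y)`, while the approximations of `A`
are pairwise distinct. -/
lemma exists_r_not_le0fin (h3 : σ.A3) (h4 : σ.A4) (A : σ.R) (Y : σ.S) (j : ℕ) :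
    ∃ n, ∀ k ≤ j, ¬ σ.le0fin (σ.r A n) (σ.s Y k) := by
  by_contra! h
  have hfin : (⋃ k ∈ Finset.range (j + 1), {b | σ.le0fin b (σ.s Y k)}).Finite :=
    (Finset.range (j + 1)).finite_toSet.biUnion fun k _ => (h4.1 (σ.s Y k)).1
  refine Set.infinite_range_of_injective (r_injective h3 A) (hfin.subset ?_)
  rintro _ ⟨n, rfl⟩
  obtain ⟨k, hk, hfit⟩ := h n
  exact Set.mem_biUnion (Finset.mem_range.2 (Nat.lt_succ_of_le hk)) hfit

lemma lt_depth_toNat {b : σ.AR} {Y : σ.S} {j : ℕ} (hfit : ∃ k, σ.le0fin b (σ.s Y k))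
    (hshallow : ∀ k ≤ j, ¬ σ.le0fin b (σ.s Y k)) : j < (σ.depth b Y).toNat := by
  rw [depth, if_pos hfit, Int.toNat_natCast]
  exact lt_of_not_ge fun hle => hshallow _ hle (Nat.sInf_mem hfit)

lemma le_refl_of_basicR_nonempty (h3 : σ.A3) (h4 : σ.A4) (h6 : σ.A6) {a : σ.AR} {Y : σ.S}
    (haY : (σ.basicR a Y).Nonempty) : σ.le Y Y := by
  obtain ⟨A, hAY, -⟩ := haY
  rw [h4.2.1 Y Y]
  intro j
  obtain ⟨n, hshallow⟩ := exists_r_not_le0fin h3 h4 A Y j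
  have hfit : ∃ k, σ.le0fin (σ.r A n) (σ.s Y k) := (h4.2.2.1 A Y).1 hAY n
  obtain ⟨X, hX, -⟩ := h6 (σ.r A n) ∅ Y ⟨A, hAY, n, rfl⟩
  rw [← s_eq_of_mem_basicSn h3 hX (lt_depth_toNat hfit hshallow)]
  exact (h4.2.1 X Y).1 hX.1 j

end RamseyStructure

/-- Decidability of combinatorial forcing: some `(M,X)` with `M` perfect `⊆ Q`
and `X ≤ Y` compatible with `a` decides `(u,a)`. -/
theorem stmt6 (σ : RamseyStructure) (hax : σ.AxiomsAll)
    (F : Set (List Bool × σ.AR)) (u : List Bool) (a : σ.AR)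
    (Q : Set (ℕ → Bool)) (hQ : PerfectSet Q) (Y : σ.S) (haY : (σ.basicR a Y).Nonempty) :
    ∃ M : Set (ℕ → Bool), PerfectSet M ∧ M ⊆ Q ∧
      ∃ X : σ.S, σ.le X Y ∧ (σ.basicR a X).Nonempty ∧ decides σ F M X u a := by
  obtain ⟨-, -, h3, -, h4, -, h6⟩ := hax
  by_cases hrej : rejects σ F Q Y u a
  · exact ⟨Q, hQ, subset_rfl, Y, RamseyStructure.le_refl_of_basicR_nonempty h3 h4 h6 haY,
      haY, Or.inr hrej⟩
  · simp only [rejects, not_forall, not_not] at hrej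
    obtain ⟨M, hM, hMQ, X, hXY, hXa, hacc⟩ := hrej
    exact ⟨M, hM, fun x hx => (hMQ hx).1, X, hXY, hXa, Or.inl hacc⟩
end
end
end

section
/- Marczewski's theorem: if 𝒜 is a σ-algebra of subsets of a set X and 𝒜₀ ⊆ 𝒜 is a σ-ideal such that (𝒜, 𝒜₀) is a Marczewski pair, then 𝒜 is closed under the Souslin operation: for every Souslin scheme (A_s)_{s ∈ ℕ^{<ℕ}} with all A_s ∈ 𝒜, the set ⋃_{f ∈ ℕ^ℕ} ⋂_{n} A_{f|n} belongs to 𝒜. -/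
/-!
Let `K s` be the Souslin set of the scheme restricted to branches through `s`, and let `Φ s`
be a measurable Marczewski hull of `K s`, cut down to lie inside `A s`. Since
`K s ⊆ ⋃ k, K (s ++ [k])`, the measurable set `Φ s \ ⋃ k, Φ (s ++ [k])` lies in `Φ s \ K s`,
so it belongs to the σ-ideal. A point of `Φ []` outside all of these countably many
remainders lets one walk down the tree through the sets `Φ s ⊆ A s`, so it lies in the Souslin
set `K []`. Hence `Φ [] \ K []` is in the σ-ideal, thus measurable, and so is `K []`.
-/

open Set

variable {X : Type*}

def souslin (A : List ℕ → Set X) : Set X :=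
  ⋃ f : ℕ → ℕ, ⋂ n : ℕ, A (List.ofFn fun i : Fin n => f i)

theorem mem_souslin {A : List ℕ → Set X} {x : X} :
    x ∈ souslin A ↔ ∃ f : ℕ → ℕ, ∀ n, x ∈ A (List.ofFn fun i : Fin n => f i) := by
  simp only [souslin, mem_iUnion, mem_iInter]

theorem souslin_subset_apply_nil (A : List ℕ → Set X) : souslin A ⊆ A [] := by
  intro x hx
  obtain ⟨f, hf⟩ := mem_souslin.1 hx
  simpa using hf 0

theorem souslin_subset_iUnion_cons (A : List ℕ → Set X) :
    souslin A ⊆ ⋃ k, souslin fun t => A (k :: t) := by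
  intro x hx
  obtain ⟨f, hf⟩ := mem_souslin.1 hx
  refine mem_iUnion.2 ⟨f 0, mem_souslin.2 ⟨fun n => f (n + 1), fun n => ?_⟩⟩
  simpa [List.ofFn_succ] using hf (n + 1)

theorem exists_forall_ofFn_of_forall_exists_append {P : List ℕ → Prop} (h_nil : P [])
    (h_append : ∀ s, P s → ∃ k, P (s ++ [k])) :
    ∃ f : ℕ → ℕ, ∀ n, P (List.ofFn fun i : Fin n => f i) := by
  choose! next h_next using h_append
  let path : ℕ → List ℕ := fun n => Nat.rec [] (fun _ s => s ++ [next s]) n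
  have h_path : ∀ n, P (path n) := fun n => Nat.rec h_nil (fun _ ih => h_next _ ih) n
  refine ⟨fun n => next (path n), fun n => ?_⟩
  suffices path n = List.ofFn fun i : Fin n => next (path i) from this ▸ h_path n
  induction n with
  | zero => rfl
  | succ n ih =>
    rw [List.ofFn_succ_last]
    exact congrArg (· ++ [next (path n)]) ih

theorem diff_iUnion_diff_subset_souslin {A Φ : List ℕ → Set X} (hΦA : ∀ s, Φ s ⊆ A s) :
    Φ [] \ ⋃ s, (Φ s \ ⋃ k, Φ (s ++ [k])) ⊆ souslin A := by
  rintro x ⟨hx, hx_rem⟩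
  have h_append : ∀ s, x ∈ Φ s → ∃ k, x ∈ Φ (s ++ [k]) := by
    intro s hs
    by_contra h
    exact hx_rem (mem_iUnion.2 ⟨s, hs, by simpa using h⟩)
  obtain ⟨f, hf⟩ := exists_forall_ofFn_of_forall_exists_append hx h_append
  exact mem_souslin.2 ⟨f, fun n => hΦA _ (hf n)⟩

theorem iUnion_mem_of_countable {I : Set (Set X)}
    (hI : ∀ g : ℕ → Set X, (∀ n, g n ∈ I) → ⋃ n, g n ∈ I)
    {ι : Type*} [Countable ι] [Nonempty ι] {g : ι → Set X} (hg : ∀ i, g i ∈ I) :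
    ⋃ i, g i ∈ I := by
  obtain ⟨e, he⟩ := exists_surjective_nat ι
  rw [← he.iUnion_comp]
  exact hI _ fun n => hg (e n)

def IsMarczewskiPair [MeasurableSpace X] (I : Set (Set X)) : Prop :=
  ∀ A : Set X, ∃ Φ, MeasurableSet Φ ∧ A ⊆ Φ ∧ ∀ B ⊆ Φ \ A, MeasurableSet B → B ∈ I

theorem measurableSet_souslin [MeasurableSpace X] {I : Set (Set X)}
    (hI_meas : ∀ B ∈ I, MeasurableSet B) (hI_mono : ∀ B ∈ I, ∀ C ⊆ B, C ∈ I)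
    (hI_iUnion : ∀ g : ℕ → Set X, (∀ n, g n ∈ I) → ⋃ n, g n ∈ I) (hI : IsMarczewskiPair I)
    {A : List ℕ → Set X} (hA : ∀ s, MeasurableSet (A s)) : MeasurableSet (souslin A) := by
  set K : List ℕ → Set X := fun s => souslin fun t => A (s ++ t)
  choose Ψ hΨ hKΨ hΨ_rem using fun s => hI (K s)
  set Φ : List ℕ → Set X := fun s => Ψ s ∩ A s
  have hΦ : ∀ s, MeasurableSet (Φ s) := fun s => (hΨ s).inter (hA s)
  have hKΦ : ∀ s, K s ⊆ Φ s := fun s =>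
    subset_inter (hKΨ s) (by simpa using souslin_subset_apply_nil fun t => A (s ++ t))
  have h_rem : ∀ s, Φ s \ ⋃ k, Φ (s ++ [k]) ∈ I := by
    refine fun s => hΨ_rem s _ ?_ ((hΦ s).diff (.iUnion fun k => hΦ _))
    rintro x ⟨⟨hxΨ, -⟩, hx⟩
    refine ⟨hxΨ, fun hxK => hx ?_⟩
    have hK_cons : K s ⊆ ⋃ k, K (s ++ [k]) := by
      simpa [K] using souslin_subset_iUnion_cons fun t => A (s ++ t)
    exact iUnion_mono (fun k => hKΦ (s ++ [k])) (hK_cons hxK)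
  have h_gap : Φ [] \ souslin A ∈ I :=
    hI_mono _ (iUnion_mem_of_countable hI_iUnion h_rem) _
      (sdiff_subset_comm.1 (diff_iUnion_diff_subset_souslin fun s => inter_subset_right))
  rw [← sdiff_sdiff_cancel_left (show souslin A ⊆ Φ [] from hKΦ [])]
  exact (hΦ []).diff (hI_meas _ h_gap)

/-- Marczewski's theorem: a σ-algebra `𝒜` which together with a σ-ideal
`𝒜₀ ⊆ 𝒜` forms a Marczewski pair is closed under the Souslin operation. -/
theorem stmt15 {X : Type} (𝒜 𝒜₀ : Set (Set X))
    (hUniv : Set.univ ∈ 𝒜)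
    (hCompl : ∀ B ∈ 𝒜, Bᶜ ∈ 𝒜)
    (hUnion : ∀ g : ℕ → Set X, (∀ n, g n ∈ 𝒜) → (⋃ n, g n) ∈ 𝒜)
    (hIdealSub : 𝒜₀ ⊆ 𝒜)
    (hIdealDown : ∀ B ∈ 𝒜₀, ∀ C, C ⊆ B → C ∈ 𝒜₀)
    (hIdealUnion : ∀ g : ℕ → Set X, (∀ n, g n ∈ 𝒜₀) → (⋃ n, g n) ∈ 𝒜₀)
    (hMarc : ∀ A : Set X, ∃ Φ ∈ 𝒜, A ⊆ Φ ∧ ∀ B, B ⊆ Φ \ A → B ∈ 𝒜 → B ∈ 𝒜₀)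
    (scheme : List ℕ → Set X) (hscheme : ∀ s, scheme s ∈ 𝒜) :
    (⋃ f : ℕ → ℕ, ⋂ n : ℕ, scheme (List.ofFn fun i : Fin n => f i)) ∈ 𝒜 := by
  let _ : MeasurableSpace X :=
    { MeasurableSet' := (· ∈ 𝒜)
      measurableSet_empty := compl_univ (α := X) ▸ hCompl _ hUniv
      measurableSet_compl := hCompl
      measurableSet_iUnion := hUnion }
  exact measurableSet_souslin hIdealSub hIdealDown hIdealUnion hMarc hscheme
end
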